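/- Let c, d ∈ ℕ with c ≥ 2, and let d' ∈ {2,...,d}. If c divides k!·S(d',k) for every k ∈ {2,...,d'}, where S(d',k) is the Stirling number of the second kind, then every hypergraph H satisfies disc(Δ^d H, c) ≤ disc(Δ^{d−d'+1} H, c). -/

import Mathlib

/-- The Stirling numbers of the second kind: `stirling2 d k` is the number of
partitions of a `d`-element set into `k` nonempty parts. -/
def stirling2 : ℕ → ℕ → ℕ
  | 0, 0 => 1
  | 0, _ + 1 => 0
  | _ + 1, 0 => 0
  | d + 1, k + 1 => (k + 1) * stirling2 d (k + 1) + stirling2 d k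

/-- The discrepancy of a `c`-coloring `χ` of the hypergraph with edge set `H`. -/
noncomputable def discCol {V : Type} (H : Finset (Finset V)) (c : ℕ) (χ : V → Fin c) : ℝ :=
  ⨆ E ∈ H, ⨆ i : Fin c, |((E.filter fun v => χ v = i).card : ℝ) - (E.card : ℝ) / (c : ℝ)|

/-- The `c`-color discrepancy of the hypergraph with edge set `H`. -/
noncomputable def disc {V : Type} (H : Finset (Finset V)) (c : ℕ) : ℝ :=
  ⨅ χ : V → Fin c, discCol H c χ

/-- The `d`-fold symmetric product of a hypergraph: edge set `{E^d : E ∈ H}`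
on the vertex set `V^d`. -/
def symProd {V : Type} [DecidableEq V] (H : Finset (Finset V)) (d : ℕ) :
    Finset (Finset (Fin d → V)) :=
  H.image fun E => Fintype.piFinset fun _ : Fin d => E

open Finset

lemma card_filter_equiv {α β : Type*} [Fintype α] [Fintype β]
    (e : α ≃ β) (P : β → Prop) [DecidablePred P] :
    (univ.filter fun a => P (e a)).card = (univ.filter P).card := by
  apply Finset.card_nbij' (i := fun a => e a) (j := fun b => e.symm b) <;> simp [Set.MapsTo, Set.LeftInvOn, Set.RightInvOn]

lemma image_cons {n : ℕ} {W : Type*} [DecidableEq W] (v : W) (g : Fin n → W) :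
    Finset.image (Fin.cons v g : Fin (n+1) → W) univ = insert v (Finset.image g univ) := by
  ext w
  simp only [mem_image, mem_univ, true_and, mem_insert]
  constructor
  · rintro ⟨i, hi⟩
    induction i using Fin.cases with
    | zero => left; simp only [Fin.cons_zero] at hi; exact hi.symm
    | succ j => right; exact ⟨j, by simpa using hi⟩
  · rintro (rfl | ⟨j, hj⟩)
    · exact ⟨0, by simp⟩
    · exact ⟨j.succ, by simpa using hj⟩

lemma surj_count {W : Type*} [Fintype W] [DecidableEq W] (n : ℕ) (S : Finset W) :
    (univ.filter fun f : Fin n → W => Finset.image f univ = S).card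
      = S.card.factorial * stirling2 n S.card := by
  induction n generalizing S with
  | zero =>
    rcases S.eq_empty_or_nonempty with rfl | ⟨z, hz⟩
    · rw [show (univ.filter fun f : Fin 0 → W => Finset.image f univ = ∅) = univ by
        simp [Finset.eq_empty_iff_forall_notMem]]
      simp [stirling2]
    · have he : (univ.filter fun f : Fin 0 → W => Finset.image f univ = S) = ∅ := by
        apply Finset.eq_empty_iff_forall_notMem.2
        intro f hf
        simp only [mem_filter] at hf
        have : z ∈ Finset.image f univ := hf.2 ▸ hz
        simp at this
      rw [he]
      have hne : S.card ≠ 0 := by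
        intro h
        rw [Finset.card_eq_zero] at h
        simp [h] at hz
      obtain ⟨m, hm⟩ := Nat.exists_eq_succ_of_ne_zero hne
      simp [hm, stirling2]
  | succ n ih =>
    have key : (univ.filter fun f : Fin (n+1) → W => Finset.image f univ = S).card
        = ∑ v : W, (univ.filter fun g : Fin n → W =>
            insert v (Finset.image g univ) = S).card := by
      rw [← card_filter_equiv (Fin.consEquiv fun _ : Fin (n+1) => W)
        (fun f : Fin (n+1) → W => Finset.image f univ = S)]
      rw [Finset.card_filter, Fintype.sum_prod_type]
      congr 1; ext v
      rw [Finset.card_filter]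
      apply Finset.sum_congr rfl
      intro g _
      have : Finset.image ((Fin.consEquiv fun _ : Fin (n+1) => W) (v, g)) univ
          = insert v (Finset.image g univ) := image_cons v g
      rw [this]
    rw [key]
    have step : ∀ v : W, (univ.filter fun g : Fin n → W =>
        insert v (Finset.image g univ) = S).card
        = if v ∈ S then S.card.factorial * stirling2 n S.card
            + (S.erase v).card.factorial * stirling2 n (S.erase v).card else 0 := by
      intro v
      by_cases hv : v ∈ S
      · simp only [hv, if_true]
        have hsplit : (univ.filter fun g : Fin n → W => insert v (Finset.image g univ) = S)
            = (univ.filter fun g : Fin n → W => Finset.image g univ = S)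
              ∪ (univ.filter fun g : Fin n → W => Finset.image g univ = S.erase v) := by
          rw [← Finset.filter_or]
          apply Finset.filter_congr
          intro g _
          constructor
          · intro h
            by_cases hvi : v ∈ Finset.image g univ
            · left; rwa [Finset.insert_eq_self.2 hvi] at h
            · right; rw [← h, Finset.erase_insert hvi]
          · intro h
            rcases h with h | h
            · rw [h]; exact Finset.insert_eq_self.2 hv
            · rw [h]; exact Finset.insert_erase hv
        have hdisj : Disjoint (univ.filter fun g : Fin n → W => Finset.image g univ = S)
            (univ.filter fun g : Fin n → W => Finset.image g univ = S.erase v) := by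
          rw [Finset.disjoint_left]
          intro g hg1 hg2
          simp only [mem_filter, mem_univ, true_and] at hg1 hg2
          have : v ∈ S.erase v := by rw [← hg2, hg1]; exact hv
          exact (Finset.notMem_erase v S) this
        rw [hsplit, Finset.card_union_of_disjoint hdisj, ih, ih]
      · simp only [hv, if_false, Finset.card_eq_zero]
        apply Finset.filter_eq_empty_iff.2
        intro g _
        intro h
        exact hv (h ▸ Finset.mem_insert_self v _)
    rw [Finset.sum_congr rfl (fun v _ => step v)]
    rw [Finset.sum_ite_mem, Finset.univ_inter]
    have step2 : ∀ v ∈ S, S.card.factorial * stirling2 n S.card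
        + (S.erase v).card.factorial * stirling2 n (S.erase v).card
        = S.card.factorial * stirling2 n S.card
        + (S.card - 1).factorial * stirling2 n (S.card - 1) := by
      intro v hv
      rw [Finset.card_erase_of_mem hv]
    rw [Finset.sum_congr rfl step2, Finset.sum_const, smul_eq_mul]
    rcases Nat.eq_zero_or_pos S.card with h0 | hpos
    · simp [h0, stirling2]
    · obtain ⟨m, hm⟩ := Nat.exists_eq_succ_of_ne_zero (Nat.pos_iff_ne_zero.mp hpos)
      rw [hm]
      simp only [Nat.succ_sub_one]
      show (m+1) * ((m+1).factorial * stirling2 n (m+1) + m.factorial * stirling2 n m)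
        = (m+1).factorial * stirling2 (n+1) (m+1)
      rw [show stirling2 (n+1) (m+1) = (m+1) * stirling2 n (m+1) + stirling2 n m from rfl]
      rw [Nat.factorial_succ]
      ring


lemma exists_balanced {α : Type*} [Fintype α] [DecidableEq α] (c : ℕ) (hc : 0 < c)
    (G : Finset α) (h : c ∣ G.card) :
    ∃ ψ : α → Fin c, ∀ i : Fin c, (G.filter fun x => ψ x = i).card = G.card / c := by
  obtain ⟨m, hm⟩ := h
  have e : {x // x ∈ G} ≃ Fin c × Fin m := (G.equivFinOfCardEq hm).trans finProdFinEquiv.symm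
  refine ⟨fun x => if hx : x ∈ G then (e ⟨x, hx⟩).1 else ⟨0, hc⟩, fun i => ?_⟩
  have hcard : (G.filter fun x => (if hx : x ∈ G then (e ⟨x, hx⟩).1 else ⟨0, hc⟩) = i).card
      = (univ.filter fun p : Fin c × Fin m => p.1 = i).card := by
    refine Finset.card_bij' (fun x hx => e ⟨x, (Finset.mem_filter.1 hx).1⟩)
      (fun p _ => (e.symm p : α)) ?hi ?hj ?left ?right
    case hi =>
      intro x hx
      obtain ⟨h1, h2⟩ := Finset.mem_filter.1 hx
      rw [dif_pos h1] at h2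
      simp [h2]
    case hj =>
      intro p hp
      simp only [mem_filter, mem_univ, true_and] at hp
      rw [Finset.mem_filter]
      refine ⟨(e.symm p).2, ?_⟩
      rw [dif_pos (e.symm p).2]
      have h5 : (⟨(e.symm p : α), (e.symm p).2⟩ : {x // x ∈ G}) = e.symm p := rfl
      rw [h5, Equiv.apply_symm_apply, hp]
    case left =>
      intro x hx
      simp
    case right =>
      intro p hp
      show e ⟨(e.symm p : α), _⟩ = p
      have h5 : (⟨(e.symm p : α), (e.symm p).2⟩ : {x // x ∈ G}) = e.symm p := rfl
      simp only [Subtype.coe_eta]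
      rw [Equiv.apply_symm_apply]
  rw [hcard]
  have hc2 : (univ.filter fun p : Fin c × Fin m => p.1 = i).card = m := by
    rw [Finset.card_filter, Fintype.sum_prod_type]
    have : ∀ x : Fin c, (∑ y : Fin m, if x = i then 1 else 0) = if x = i then m else 0 := by
      intro x; by_cases hx : x = i <;> simp [hx]
    rw [Finset.sum_congr rfl (fun x _ => this x)]
    simp
  rw [hc2, hm, Nat.mul_div_cancel_left m hc]


section SplitJoin
variable {V : Type} {a d' d : ℕ}

def sp1 (h : a + d' = d) (v : Fin d → V) : Fin a → V :=
  fun j => v (Fin.castLE (by omega) j)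

def sp2 (h : a + d' = d) (v : Fin d → V) : Fin d' → V :=
  fun j => v ⟨a + j, by have := j.isLt; omega⟩

def jn (h : a + d' = d) (w : Fin a → V) (x : Fin d' → V) : Fin d → V :=
  fun j => if hj : (j : ℕ) < a then w ⟨j, hj⟩ else x ⟨(j : ℕ) - a, by have := j.isLt; omega⟩

lemma sp1_jn (h : a + d' = d) (w : Fin a → V) (x : Fin d' → V) : sp1 h (jn h w x) = w := by
  funext j
  have hj : ((Fin.castLE (by omega : a ≤ d) j : Fin d) : ℕ) < a := j.isLt
  simp only [sp1, jn, dif_pos hj]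
  congr 1

lemma sp2_jn (h : a + d' = d) (w : Fin a → V) (x : Fin d' → V) : sp2 h (jn h w x) = x := by
  funext j
  have hj : ¬ (a + (j : ℕ) < a) := by omega
  simp only [sp2, jn, dif_neg hj]
  congr 1
  ext
  simp

lemma jn_sp (h : a + d' = d) (v : Fin d → V) : jn h (sp1 h v) (sp2 h v) = v := by
  funext j
  by_cases hj : (j : ℕ) < a
  · simp only [jn, dif_pos hj, sp1]
    congr 1
  · simp only [jn, dif_neg hj, sp2]
    congr 1
    ext
    simp only
    have := j.isLt
    omega

lemma jn_mem {E : Finset V} (h : a + d' = d) {w : Fin a → V} {x : Fin d' → V}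
    (hw : ∀ j, w j ∈ E) (hx : ∀ j, x j ∈ E) : ∀ j, jn h w x j ∈ E := by
  intro j
  unfold jn
  split <;> [exact hw _; exact hx _]

end SplitJoin

section Psi
variable {V : Type} [Fintype V] [DecidableEq V]

def groupG (d' : ℕ) (S : Finset V) : Finset (Fin d' → V) :=
  univ.filter fun x => Finset.image x univ = S

lemma groupG_card (d' : ℕ) (S : Finset V) :
    (groupG d' S).card = S.card.factorial * stirling2 d' S.card := surj_count d' S

lemma groupG_card_eq_zero {d' : ℕ} {S : Finset V} (h : d' < S.card) :
    (groupG d' S).card = 0 := by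
  rw [Finset.card_eq_zero]
  apply Finset.eq_empty_iff_forall_notMem.2
  intro x hx
  rw [groupG, mem_filter] at hx
  have h1 : (Finset.image x univ).card ≤ d' := by
    calc (Finset.image x univ).card ≤ (univ : Finset (Fin d')).card := Finset.card_image_le
    _ = d' := by simp
  rw [hx.2] at h1
  omega

noncomputable def psiS (c d' : ℕ) (hc : 0 < c) (S : Finset V) : (Fin d' → V) → Fin c :=
  if h : c ∣ (groupG d' S).card then Classical.choose (exists_balanced c hc _ h)
  else fun _ => ⟨0, hc⟩

noncomputable def psi (c d' : ℕ) (hc : 0 < c) : (Fin d' → V) → Fin c :=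
  fun x => psiS c d' hc (Finset.image x univ) x

lemma psi_count {c d' : ℕ} (hc : 0 < c) (S : Finset V) (h : c ∣ (groupG d' S).card)
    (i : Fin c) :
    ((groupG d' S).filter fun x => psi c d' hc x = i).card = (groupG d' S).card / c := by
  have h1 : ((groupG d' S).filter fun x => psi c d' hc x = i)
      = ((groupG d' S).filter fun x => psiS c d' hc S x = i) := by
    apply Finset.filter_congr
    intro x hx
    rw [groupG, mem_filter] at hx
    rw [psi, hx.2]
  rw [h1, psiS, dif_pos h]
  exact Classical.choose_spec (exists_balanced c hc _ h) i

end Psi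


section Main
variable {V : Type} [Fintype V] [DecidableEq V]

noncomputable def chi' (c a d' d : ℕ) (hc : 0 < c) (h0 : 0 < d') (had : a + d' = d)
    (χ : (Fin (a+1) → V) → Fin c) : (Fin d → V) → Fin c :=
  fun v => if ∀ j : Fin d', sp2 had v j = sp2 had v ⟨0, h0⟩
    then χ (Fin.snoc (sp1 had v) (sp2 had v ⟨0, h0⟩))
    else psi c d' hc (sp2 had v)

lemma count_eq (c a d' d : ℕ) (hc : 0 < c) (h2 : 2 ≤ d') (h0 : 0 < d')
    (had : a + d' = d) (hdiv : ∀ k, 2 ≤ k → k ≤ d' → c ∣ k.factorial * stirling2 d' k)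
    (χ : (Fin (a+1) → V) → Fin c) (E : Finset V) (i : Fin c) :
    ∃ K : ℕ,
      ((Fintype.piFinset fun _ : Fin d => E).filter
          fun v => chi' c a d' d hc h0 had χ v = i).card
        = ((Fintype.piFinset fun _ : Fin (a+1) => E).filter fun u => χ u = i).card + K
      ∧ c * K + E.card ^ (a+1) = E.card ^ d := by
  classical
  set P := Fintype.piFinset fun _ : Fin d => E with hP
  set D : (Fin d → V) → Prop := fun v => ∀ j : Fin d', sp2 had v j = sp2 had v ⟨0, h0⟩ with hD
  set Q := Fintype.piFinset fun _ : Fin d' => E with hQ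
  set R : (Fin d' → V) → Prop := fun x =>
    (¬ ∀ j : Fin d', x j = x ⟨0, h0⟩) ∧ psi c d' hc x = i with hR
  set t : Finset (Finset V) := E.powerset.filter (fun S => 2 ≤ S.card) with ht
  -- step 1 : split by diagonal
  have split1 : (P.filter fun v => chi' c a d' d hc h0 had χ v = i).card
      = (P.filter fun v => chi' c a d' d hc h0 had χ v = i ∧ D v).card
        + (P.filter fun v => chi' c a d' d hc h0 had χ v = i ∧ ¬ D v).card := by
    rw [← Finset.filter_filter, ← Finset.filter_filter]
    exact (Finset.card_filter_add_card_filter_not (p := D)).symm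
  -- step 2 : diagonal part
  have diag : (P.filter fun v => chi' c a d' d hc h0 had χ v = i ∧ D v).card
      = ((Fintype.piFinset fun _ : Fin (a+1) => E).filter fun u => χ u = i).card := by
    refine Finset.card_bij'
      (fun v _ => Fin.snoc (sp1 had v) (sp2 had v ⟨0, h0⟩))
      (fun u _ => jn had (Fin.init u) (fun _ => u (Fin.last a))) ?hi ?hj ?left ?right
    case hi =>
      intro v hv
      rw [Finset.mem_filter] at hv ⊢
      obtain ⟨hvP, hχ, hDv⟩ := hv
      rw [hP, Fintype.mem_piFinset] at hvP
      constructor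
      · rw [Fintype.mem_piFinset]
        intro q
        induction q using Fin.lastCases with
        | last => beta_reduce; rw [Fin.snoc_last]; exact hvP _
        | cast j => beta_reduce; rw [Fin.snoc_castSucc]; exact hvP _
      · rw [chi', if_pos hDv] at hχ
        exact hχ
    case hj =>
      intro u hu
      rw [Finset.mem_filter] at hu ⊢
      obtain ⟨huP, hχu⟩ := hu
      rw [Fintype.mem_piFinset] at huP
      have hDj : D (jn had (Fin.init u) (fun _ => u (Fin.last a))) := by
        rw [hD]
        intro j
        rw [sp2_jn]
      refine ⟨?_, ?_, hDj⟩
      · rw [hP, Fintype.mem_piFinset]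
        apply jn_mem
        · intro j; exact huP _
        · intro j; exact huP _
      · rw [chi', if_pos hDj, sp1_jn, sp2_jn, Fin.snoc_init_self]
        exact hχu
    case left =>
      intro v hv
      rw [Finset.mem_filter] at hv
      obtain ⟨hvP, hχ, hDv⟩ := hv
      beta_reduce
      rw [Fin.init_snoc, Fin.snoc_last]
      have : (fun _ : Fin d' => sp2 had v ⟨0, h0⟩) = sp2 had v := by
        funext j; exact (hDv j).symm
      rw [this, jn_sp]
    case right =>
      intro u hu
      beta_reduce
      rw [sp1_jn, sp2_jn, Fin.snoc_init_self]
  -- step 3a : nondiagonal part splits off first block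
  have nondiag1 : (P.filter fun v => chi' c a d' d hc h0 had χ v = i ∧ ¬ D v).card
      = E.card ^ a * (Q.filter R).card := by
    have hbij : (P.filter fun v => chi' c a d' d hc h0 had χ v = i ∧ ¬ D v).card
        = ((Fintype.piFinset fun _ : Fin a => E) ×ˢ (Q.filter R)).card := by
      refine Finset.card_bij' (fun v _ => (sp1 had v, sp2 had v))
        (fun p _ => jn had p.1 p.2) ?hi ?hj ?left ?right
      case hi =>
        intro v hv
        rw [Finset.mem_filter] at hv
        obtain ⟨hvP, hχ, hDv⟩ := hv
        rw [hP, Fintype.mem_piFinset] at hvP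
        beta_reduce
        rw [Finset.mem_product]
        constructor
        · rw [Fintype.mem_piFinset]; intro j; exact hvP _
        · rw [Finset.mem_filter]
          refine ⟨by rw [hQ, Fintype.mem_piFinset]; intro j; exact hvP _, hDv, ?_⟩
          rw [chi', if_neg hDv] at hχ
          exact hχ
      case hj =>
        intro p hp
        rw [Finset.mem_product] at hp
        obtain ⟨hp1, hp2⟩ := hp
        rw [Finset.mem_filter] at hp2
        obtain ⟨hp2Q, hp2R⟩ := hp2
        rw [Fintype.mem_piFinset] at hp1
        rw [hQ, Fintype.mem_piFinset] at hp2Q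
        have hnD : ¬ D (jn had p.1 p.2) := by
          rw [hD]
          intro hcon
          simp only [sp2_jn] at hcon
          exact hp2R.1 hcon
        rw [Finset.mem_filter]
        refine ⟨by rw [hP, Fintype.mem_piFinset]; exact jn_mem had hp1 hp2Q, ?_, hnD⟩
        rw [chi', if_neg hnD, sp2_jn]
        exact hp2R.2
      case left =>
        intro v hv
        beta_reduce
        rw [jn_sp]
      case right =>
        intro p hp
        beta_reduce
        rw [sp1_jn, sp2_jn]
    rw [hbij, Finset.card_product, Fintype.card_piFinset]
    simp
  -- divisibility
  have hdvd : ∀ S ∈ t, c ∣ (groupG d' S).card := by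
    intro S hS
    rw [ht, Finset.mem_filter, Finset.mem_powerset] at hS
    rcases le_or_gt S.card d' with h | h
    · rw [groupG_card]
      exact hdiv S.card hS.2 h
    · rw [groupG_card_eq_zero h]
      exact dvd_zero c
  -- step 3b : fiberwise over image
  have nondiag2 : (Q.filter R).card = ∑ S ∈ t, (groupG d' S).card / c := by
    have hfib : (Q.filter R).card
        = ∑ S ∈ t, ((Q.filter R).filter fun x => Finset.image x univ = S).card := by
      apply Finset.card_eq_sum_card_fiberwise
      intro x hx
      simp only [Finset.mem_coe] at hx ⊢
      rw [Finset.mem_filter] at hx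
      obtain ⟨hxQ, hxR⟩ := hx
      rw [hQ, Fintype.mem_piFinset] at hxQ
      rw [ht, Finset.mem_filter, Finset.mem_powerset]
      constructor
      · intro y hy
        rw [Finset.mem_image] at hy
        obtain ⟨j, _, rfl⟩ := hy
        exact hxQ j
      · have h1 : 1 < (Finset.image x univ).card := by
          rw [Finset.one_lt_card]
          obtain ⟨j, hj⟩ := not_forall.1 hxR.1
          exact ⟨x j, Finset.mem_image_of_mem x (mem_univ j), x ⟨0, h0⟩,
            Finset.mem_image_of_mem x (mem_univ _), hj⟩
        omega
    rw [hfib]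
    apply Finset.sum_congr rfl
    intro S hS
    have hS' := hS
    rw [ht, Finset.mem_filter, Finset.mem_powerset] at hS'
    have heq : (Q.filter R).filter (fun x => Finset.image x univ = S)
        = (groupG d' S).filter fun x => psi c d' hc x = i := by
      ext x
      simp only [Finset.mem_filter, groupG, Finset.mem_univ, true_and, hQ,
        Fintype.mem_piFinset, hR]
      constructor
      · rintro ⟨⟨hxE, hne, hpsi⟩, him⟩
        exact ⟨him, hpsi⟩
      · rintro ⟨him, hpsi⟩
        refine ⟨⟨?_, ?_, hpsi⟩, him⟩
        · intro j
          exact hS'.1 (him ▸ Finset.mem_image_of_mem x (mem_univ j))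
        · intro hall
          have hsub : Finset.image x univ ⊆ {x ⟨0, h0⟩} := by
            intro y hy
            rw [Finset.mem_image] at hy
            obtain ⟨j, _, rfl⟩ := hy
            rw [Finset.mem_singleton]
            exact hall j
          have hle : S.card ≤ 1 := by
            rw [← him]
            exact (Finset.card_le_card hsub).trans (by simp)
          omega
    rw [heq, psi_count hc S (hdvd S hS)]
  -- main counting identity
  have count3 : (∑ S ∈ t, (groupG d' S).card) + E.card = E.card ^ d' := by
    have hQcard : Q.card = E.card ^ d' := by
      rw [hQ, Fintype.card_piFinset]
      simp
    set t'' : Finset (Finset V) := E.powerset.filter (fun S => S.card = 1) with ht''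
    set t' : Finset (Finset V) := E.powerset.filter (fun S => S.Nonempty) with ht'
    have hfib : Q.card = ∑ S ∈ t', (Q.filter fun x => Finset.image x univ = S).card := by
      apply Finset.card_eq_sum_card_fiberwise
      intro x hx
      simp only [Finset.mem_coe] at hx ⊢
      rw [hQ, Fintype.mem_piFinset] at hx
      rw [ht', Finset.mem_filter, Finset.mem_powerset]
      constructor
      · intro y hy
        rw [Finset.mem_image] at hy
        obtain ⟨j, _, rfl⟩ := hy
        exact hx j
      · exact ⟨x ⟨0, h0⟩, Finset.mem_image_of_mem x (mem_univ _)⟩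
    have hgrp : ∀ S ∈ t', (Q.filter fun x => Finset.image x univ = S).card
        = (groupG d' S).card := by
      intro S hS
      rw [ht', Finset.mem_filter, Finset.mem_powerset] at hS
      congr 1
      ext x
      simp only [Finset.mem_filter, groupG, Finset.mem_univ, true_and, hQ,
        Fintype.mem_piFinset]
      constructor
      · tauto
      · intro him
        exact ⟨fun j => hS.1 (him ▸ Finset.mem_image_of_mem x (mem_univ j)), him⟩
    have hsplit : t' = t'' ∪ t := by
      rw [ht', ht'', ht]
      ext S
      simp only [Finset.mem_union, Finset.mem_filter, Finset.mem_powerset]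
      constructor
      · rintro ⟨hsub, hne⟩
        have hpos := Finset.card_pos.2 hne
        rcases Nat.lt_or_ge S.card 2 with h | h
        · exact Or.inl ⟨hsub, by omega⟩
        · exact Or.inr ⟨hsub, h⟩
      · rintro (⟨hsub, h1⟩ | ⟨hsub, h2⟩) <;>
          exact ⟨hsub, Finset.card_pos.1 (by omega)⟩
    have hdisj : Disjoint t'' t := by
      rw [Finset.disjoint_left]
      intro S h1 h2
      rw [ht'', Finset.mem_filter] at h1
      rw [ht, Finset.mem_filter] at h2
      omega
    have heach : ∀ S ∈ t'', (groupG d' S).card = 1 := by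
      intro S hS
      rw [ht'', Finset.mem_filter] at hS
      obtain ⟨z, rfl⟩ := Finset.card_eq_one.1 hS.2
      rw [Finset.card_eq_one]
      refine ⟨fun _ => z, ?_⟩
      ext x
      simp only [groupG, Finset.mem_filter, Finset.mem_univ, true_and,
        Finset.mem_singleton]
      constructor
      · intro him
        funext j
        have hmem : x j ∈ Finset.image x univ := Finset.mem_image_of_mem x (mem_univ j)
        rw [him, Finset.mem_singleton] at hmem
        exact hmem
      · rintro rfl
        apply Finset.Subset.antisymm
        · intro y hy
          rw [Finset.mem_image] at hy
          obtain ⟨_, _, rfl⟩ := hy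
          exact Finset.mem_singleton_self z
        · intro y hy
          rw [Finset.mem_singleton] at hy
          subst hy
          exact Finset.mem_image_of_mem _ (mem_univ ⟨0, h0⟩)
    have hsum1 : ∑ S ∈ t'', (groupG d' S).card = E.card := by
      rw [Finset.sum_congr rfl heach, Finset.sum_const, smul_eq_mul, mul_one]
      have himg : t'' = E.image (fun z => ({z} : Finset V)) := by
        rw [ht'']
        ext S
        simp only [Finset.mem_filter, Finset.mem_powerset, Finset.mem_image]
        constructor
        · rintro ⟨hsub, h1⟩
          obtain ⟨z, rfl⟩ := Finset.card_eq_one.1 h1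
          exact ⟨z, hsub (Finset.mem_singleton_self z), rfl⟩
        · rintro ⟨z, hz, rfl⟩
          exact ⟨Finset.singleton_subset_iff.2 hz, Finset.card_singleton z⟩
      rw [himg, Finset.card_image_of_injective _ Finset.singleton_injective]
    have htotal : E.card ^ d' = E.card + ∑ S ∈ t, (groupG d' S).card := by
      rw [← hQcard, hfib, Finset.sum_congr rfl hgrp, hsplit,
        Finset.sum_union hdisj, hsum1]
    omega
  refine ⟨E.card ^ a * (Q.filter R).card, by rw [split1, diag, nondiag1], ?_⟩
  have hsum : c * ∑ S ∈ t, (groupG d' S).card / c = ∑ S ∈ t, (groupG d' S).card := by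
    rw [Finset.mul_sum]
    exact Finset.sum_congr rfl fun S hS => Nat.mul_div_cancel' (hdvd S hS)
  have key : (∑ S ∈ t, (groupG d' S).card) + E.card = E.card ^ d' := count3
  rw [nondiag2]
  calc c * (E.card ^ a * ∑ S ∈ t, (groupG d' S).card / c) + E.card ^ (a+1)
      = E.card ^ a * (c * ∑ S ∈ t, (groupG d' S).card / c) + E.card ^ a * E.card := by ring
    _ = E.card ^ a * ((∑ S ∈ t, (groupG d' S).card) + E.card) := by rw [hsum]; ring
    _ = E.card ^ a * E.card ^ d' := by rw [key]
    _ = E.card ^ d := by rw [← pow_add, had]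

lemma discCol_nonneg {V : Type} (H : Finset (Finset V)) (c : ℕ) (χ : V → Fin c) :
    0 ≤ discCol H c χ := by
  rw [discCol]
  exact Real.iSup_nonneg fun E => Real.iSup_nonneg fun _ =>
    Real.iSup_nonneg fun i => abs_nonneg _

end Main

/-- If `d' ∈ {2,…,d}` and `c ∣ k! ⬝ S(d',k)` for all `k ∈ {2,…,d'}`, then every
hypergraph satisfies `disc(Δ^d H, c) ≤ disc(Δ^(d-d'+1) H, c)`. -/
theorem stmt11 (c d d' : ℕ) (hc : 2 ≤ c) (hd' : d' ∈ Finset.Icc 2 d)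
    (hdiv : ∀ k ∈ Finset.Icc 2 d', c ∣ k.factorial * stirling2 d' k)
    (V : Type) [Fintype V] [DecidableEq V] (H : Finset (Finset V)) :
    disc (symProd H d) c ≤ disc (symProd H (d - d' + 1)) c := by
  classical
  rw [Finset.mem_Icc] at hd'
  obtain ⟨h2d', hd'd⟩ := hd'
  have hc0 : 0 < c := by omega
  have h0 : 0 < d' := by omega
  have had : (d - d') + d' = d := by omega
  have hdiv' : ∀ k, 2 ≤ k → k ≤ d' → c ∣ k.factorial * stirling2 d' k :=
    fun k h1 h2 => hdiv k (Finset.mem_Icc.2 ⟨h1, h2⟩)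
  have hne : Nonempty (Fin c) := ⟨⟨0, hc0⟩⟩
  rw [disc, disc]
  apply le_ciInf
  intro χ
  set χ' := chi' c (d - d') d' d hc0 h0 had χ with hχ'
  have hb : BddBelow (Set.range fun χ'' : (Fin d → V) → Fin c =>
      discCol (symProd H d) c χ'') := by
    refine ⟨0, ?_⟩
    rintro y ⟨χ'', rfl⟩
    exact discCol_nonneg _ _ _
  refine le_trans (ciInf_le hb χ') ?_
  have hB0 : 0 ≤ discCol (symProd H (d - d' + 1)) c χ := discCol_nonneg _ _ _
  rw [discCol]
  apply Real.iSup_le _ hB0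
  intro P
  apply Real.iSup_le _ hB0
  intro hP
  apply Real.iSup_le _ hB0
  intro i
  rw [symProd, Finset.mem_image] at hP
  obtain ⟨E, hE, rfl⟩ := hP
  obtain ⟨K, hK1, hK2⟩ := count_eq c (d - d') d' d hc0 h2d' h0 had hdiv' χ E i
  have hcard : (Fintype.piFinset fun _ : Fin d => E).card = E.card ^ d := by
    rw [Fintype.card_piFinset]
    simp
  have hcard2 : (Fintype.piFinset fun _ : Fin (d - d' + 1) => E).card
      = E.card ^ (d - d' + 1) := by
    rw [Fintype.card_piFinset]
    simp
  have hcne : (c : ℝ) ≠ 0 := Nat.cast_ne_zero.2 (by omega)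
  have hK2' : (c : ℝ) * (K : ℝ) + (E.card : ℝ) ^ (d - d' + 1) = (E.card : ℝ) ^ d := by
    exact_mod_cast congrArg (Nat.cast : ℕ → ℝ) hK2
  have hKr : (K : ℝ) = ((E.card : ℝ) ^ d - (E.card : ℝ) ^ (d - d' + 1)) / c := by
    field_simp
    linarith
  have habs : |(((Fintype.piFinset fun _ : Fin d => E).filter fun v => χ' v = i).card : ℝ)
      - ((Fintype.piFinset fun _ : Fin d => E).card : ℝ) / c|
      = |((((Fintype.piFinset fun _ : Fin (d - d' + 1) => E).filter
          fun u => χ u = i).card : ℝ))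
        - ((Fintype.piFinset fun _ : Fin (d - d' + 1) => E).card : ℝ) / c| := by
    rw [hK1, hcard, hcard2]
    congr 1
    push_cast
    rw [hKr]
    ring
  rw [habs]
  have hmem : (Fintype.piFinset fun _ : Fin (d - d' + 1) => E) ∈ symProd H (d - d' + 1) :=
    Finset.mem_image_of_mem _ hE
  rw [discCol]
  refine le_trans ?_ (le_ciSup (f := fun F : Finset (Fin (d - d' + 1) → V) =>
      ⨆ (_ : F ∈ symProd H (d - d' + 1)), ⨆ j : Fin c,
        |((F.filter fun u => χ u = j).card : ℝ) - (F.card : ℝ) / c|)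
    (Finite.bddAbove_range _)
    (Fintype.piFinset fun _ : Fin (d - d' + 1) => E))
  beta_reduce
  refine le_trans (le_ciSup (f := fun j : Fin c =>
      |((((Fintype.piFinset fun _ : Fin (d - d' + 1) => E).filter
          fun u => χ u = j).card : ℝ))
        - ((Fintype.piFinset fun _ : Fin (d - d' + 1) => E).card : ℝ) / c|)
    (Finite.bddAbove_range _) i) ?_
  exact (ciSup_pos (f := fun _ : (Fintype.piFinset fun _ : Fin (d - d' + 1) => E)
      ∈ symProd H (d - d' + 1) => ⨆ j : Fin c,
      |((((Fintype.piFinset fun _ : Fin (d - d' + 1) => E).filter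
          fun u => χ u = j).card : ℝ))
        - ((Fintype.piFinset fun _ : Fin (d - d' + 1) => E).card : ℝ) / c|)
    hmem).ge
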